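/- arXiv:2206.08216 — 3 statements merged into one kernel-verified Lean document; each statement's English description precedes it below -/
import Mathlib

section
/- Let λ > 0, ν > 0, let f(x; λ, ν) be the GE density, and let μ = (ψ(ν + 1) − ψ(1)) / λ be the GE mean. Then the third central moment of the GE distribution satisfies ∫₀^∞ (x − μ)³ f(x; λ, ν) dx = (ψ''(ν + 1) − ψ''(1)) / λ³, where ψ'' is the second derivative of the digamma function; consequently the skewness (ψ''(ν + 1) − ψ''(1)) / (ψ'(1) − ψ'(ν + 1))^(3/2) does not depend on the rate parameter λ. -/
/-!
Substituting `w = exp (-λ x)` turns the moment generating function of the GE law into a Beta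
integral: for `t < λ`, `E[exp (t (X - μ))] = exp (-t μ) Γ(ν + 1) Γ(1 - t/λ) / Γ(ν + 1 - t/λ)`.
So the cumulant generating function of `X - μ` is
`K t = log Γ(1 - t/λ) - log Γ(ν + 1 - t/λ) + log Γ(ν + 1) - t μ`, with `K 0 = K' 0 = 0`
by the choice of `μ`. The second and third central moments are then `K'' 0 = (ψ'(1) - ψ'(ν+1))/λ²`
and `K''' 0 = (ψ''(ν+1) - ψ''(1))/λ³`, and the powers of `λ` cancel in the skewness.
-/

open Real Set

/-- The generalized exponential (GE) density with rate `l > 0` and shape `v > 0`. -/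
noncomputable def geDensity (l v x : ℝ) : ℝ :=
  l * v * Real.exp (-(l * x)) * (1 - Real.exp (-(l * x))) ^ (v - 1)

/-- The digamma function `ψ(x) = d/dx log Γ(x)`. -/
noncomputable def digamma : ℝ → ℝ := deriv fun x => Real.log (Real.Gamma x)

/-- The trigamma function `ψ'`. -/
noncomputable def trigamma : ℝ → ℝ := deriv digamma

/-- The second derivative of the digamma function, `ψ''`. -/
noncomputable def tetragamma : ℝ → ℝ := deriv trigamma

open MeasureTheory ProbabilityTheory

theorem cpow_mul_one_sub_cpow_ofReal {a b u : ℝ} (hu : u ∈ Ioo 0 1) :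
    (u : ℂ) ^ ((a : ℂ) - 1) * (1 - (u : ℂ)) ^ ((b : ℂ) - 1)
      = ((u ^ (a - 1) * (1 - u) ^ (b - 1) : ℝ) : ℂ) := by
  push_cast [Complex.ofReal_cpow hu.1.le, Complex.ofReal_cpow (sub_pos.2 hu.2).le]
  rfl

theorem integrableOn_betaIntegrand {a b : ℝ} (ha : 0 < a) (hb : 0 < b) :
    IntegrableOn (fun u : ℝ => (u : ℂ) ^ ((a : ℂ) - 1) * (1 - (u : ℂ)) ^ ((b : ℂ) - 1))
      (Ioo 0 1) :=
  (intervalIntegrable_iff_integrableOn_Ioo_of_le zero_le_one).1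
    (Complex.betaIntegral_convergent (by simpa) (by simpa))

theorem integrableOn_rpow_mul_one_sub_rpow {a b : ℝ} (ha : 0 < a) (hb : 0 < b) :
    IntegrableOn (fun u : ℝ => u ^ (a - 1) * (1 - u) ^ (b - 1)) (Ioo 0 1) :=
  IntegrableOn.congr_fun (integrableOn_betaIntegrand ha hb).re
    (fun u hu => by simp [cpow_mul_one_sub_cpow_ofReal hu]) measurableSet_Ioo

theorem integral_rpow_mul_one_sub_rpow {a b : ℝ} (ha : 0 < a) (hb : 0 < b) :
    ∫ u in Ioo (0 : ℝ) 1, u ^ (a - 1) * (1 - u) ^ (b - 1) = beta a b := by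
  rw [beta_eq_betaIntegralReal a b ha hb, Complex.betaIntegral,
    intervalIntegral.integral_of_le zero_le_one, integral_Ioc_eq_integral_Ioo,
    ← RCLike.re_to_complex, ← integral_re (integrableOn_betaIntegrand ha hb)]
  exact setIntegral_congr_fun measurableSet_Ioo fun u hu => by
    simp [cpow_mul_one_sub_cpow_ofReal hu]

theorem image_exp_neg_Ioi : (fun x : ℝ => exp (-x)) '' Ioi 0 = Ioo 0 1 := by
  ext w
  constructor
  · rintro ⟨x, hx, rfl⟩
    exact ⟨exp_pos _, exp_lt_one_iff.2 (neg_lt_zero.2 hx)⟩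
  · rintro ⟨hw0, hw1⟩
    exact ⟨-log w, neg_pos.2 (log_neg hw0 hw1), by simp [exp_log hw0]⟩

theorem hasDerivAt_exp_neg (x : ℝ) : HasDerivAt (fun x : ℝ => exp (-x)) (-exp (-x)) x := by
  simpa using (hasDerivAt_neg x).exp

theorem injective_exp_neg : Function.Injective fun x : ℝ => exp (-x) :=
  exp_injective.comp neg_injective

theorem abs_deriv_exp_neg_smul_betaIntegrand {a b x : ℝ} :
    |-exp (-x)| • ((exp (-x)) ^ (a - 1) * (1 - exp (-x)) ^ (b - 1))
      = exp (-(a * x)) * (1 - exp (-x)) ^ (b - 1) := by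
  rw [abs_neg, abs_of_pos (exp_pos _), smul_eq_mul, ← exp_mul, ← mul_assoc, ← exp_add]
  ring_nf

theorem integrableOn_exp_mul_one_sub_exp_rpow {a b : ℝ} (ha : 0 < a) (hb : 0 < b) :
    IntegrableOn (fun x : ℝ => exp (-(a * x)) * (1 - exp (-x)) ^ (b - 1)) (Ioi 0) := by
  have h := integrableOn_rpow_mul_one_sub_rpow ha hb
  rw [← image_exp_neg_Ioi, integrableOn_image_iff_integrableOn_abs_deriv_smul measurableSet_Ioi
    (fun x _ => (hasDerivAt_exp_neg x).hasDerivWithinAt) injective_exp_neg.injOn] at h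
  simpa only [abs_deriv_exp_neg_smul_betaIntegrand] using h

theorem integral_exp_mul_one_sub_exp_rpow {a b : ℝ} (ha : 0 < a) (hb : 0 < b) :
    ∫ x in Ioi (0 : ℝ), exp (-(a * x)) * (1 - exp (-x)) ^ (b - 1) = beta a b := by
  rw [← integral_rpow_mul_one_sub_rpow ha hb, ← image_exp_neg_Ioi,
    integral_image_eq_integral_abs_deriv_smul measurableSet_Ioi
    (fun x _ => (hasDerivAt_exp_neg x).hasDerivWithinAt) injective_exp_neg.injOn]
  simp only [abs_deriv_exp_neg_smul_betaIntegrand]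

theorem analyticAt_Gamma_of_ne_zero {x : ℝ} (hx : Gamma x ≠ 0) : AnalyticAt ℝ Gamma x := by
  have h : AnalyticAt ℝ (fun y : ℝ => ((Complex.Gamma y)⁻¹).re) x :=
    (Complex.differentiable_one_div_Gamma.analyticAt (x : ℂ)).re_ofReal
  simp only [Complex.Gamma_ofReal, ← Complex.ofReal_inv, Complex.ofReal_re] at h
  simpa [Pi.inv_def] using h.inv (inv_ne_zero hx)

theorem analyticOnNhd_log_Gamma : AnalyticOnNhd ℝ (fun x => log (Gamma x)) (Ioi 0) := fun _ hx =>
  (analyticAt_log (Gamma_pos_of_pos hx)).comp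
    (analyticAt_Gamma_of_ne_zero (Gamma_pos_of_pos hx).ne')

theorem hasDerivAt_log_Gamma {x : ℝ} (hx : 0 < x) :
    HasDerivAt (fun x => log (Gamma x)) (digamma x) x :=
  (analyticOnNhd_log_Gamma x hx).differentiableAt.hasDerivAt

theorem hasDerivAt_digamma {x : ℝ} (hx : 0 < x) : HasDerivAt digamma (trigamma x) x :=
  (analyticOnNhd_log_Gamma.deriv x hx).differentiableAt.hasDerivAt

theorem hasDerivAt_trigamma {x : ℝ} (hx : 0 < x) : HasDerivAt trigamma (tetragamma x) x :=
  (analyticOnNhd_log_Gamma.deriv.deriv x hx).differentiableAt.hasDerivAt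

section MomentsOfMgf

variable {Ω : Type*} [MeasurableSpace Ω] {P : Measure Ω} {X : Ω → ℝ} {s : Set ℝ}

theorem eqOn_integral_pow_succ_mul_exp (hs : IsOpen s) (hsX : s ⊆ integrableExpSet X P) {n : ℕ}
    {F F' : ℝ → ℝ} (hF : ∀ t ∈ s, HasDerivAt F (F' t) t)
    (h : EqOn (fun t => P[fun ω => X ω ^ n * exp (t * X ω)]) F s) :
    EqOn (fun t => P[fun ω => X ω ^ (n + 1) * exp (t * X ω)]) F' s := fun t ht =>
  (hasDerivAt_integral_pow_mul_exp_real (interior_maximal hsX hs ht) n).unique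
    ((hF t ht).congr_of_eventuallyEq (h.eventuallyEq_of_mem (hs.mem_nhds ht)))

theorem moment_two_three_of_mgf_eqOn_exp (hs : IsOpen s) (h0 : 0 ∈ s)
    (hsX : s ⊆ integrableExpSet X P) {K K₁ K₂ K₃ : ℝ → ℝ}
    (hK : ∀ t ∈ s, HasDerivAt K (K₁ t) t) (hK₁ : ∀ t ∈ s, HasDerivAt K₁ (K₂ t) t)
    (hK₂ : ∀ t ∈ s, HasDerivAt K₂ (K₃ t) t) (hmgf : EqOn (mgf X P) (fun t => exp (K t)) s) :
    moment X 2 P = (K₂ 0 + K₁ 0 ^ 2) * exp (K 0) ∧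
      moment X 3 P = (K₃ 0 + 3 * K₁ 0 * K₂ 0 + K₁ 0 ^ 3) * exp (K 0) := by
  have e₀ : EqOn (fun t => P[fun ω => X ω ^ 0 * exp (t * X ω)]) (fun t => exp (K t)) s :=
    fun t ht => by simpa [mgf] using hmgf ht
  have e₁ := eqOn_integral_pow_succ_mul_exp hs hsX (fun t ht => (hK t ht).exp) e₀
  have e₂ := eqOn_integral_pow_succ_mul_exp hs hsX
    (fun t ht => (hK t ht).exp.mul (hK₁ t ht)) e₁
  have e₃ := eqOn_integral_pow_succ_mul_exp hs hsX
    (fun t ht => ((hK t ht).exp.mul (hK₁ t ht)).mul (hK₁ t ht) |>.add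
      ((hK t ht).exp.mul (hK₂ t ht))) e₂
  have m₂ := e₂ h0
  have m₃ := e₃ h0
  simp only [zero_add, Nat.reduceAdd, zero_mul, exp_zero, mul_one, Pi.mul_apply] at m₂ m₃
  simp only [moment, Pi.pow_apply]
  exact ⟨by linear_combination m₂, by linear_combination m₃⟩

end MomentsOfMgf

theorem geDensity_nonneg {l v x : ℝ} (hl : 0 ≤ l) (hv : 0 ≤ v) (hx : 0 ≤ x) :
    0 ≤ geDensity l v x :=
  have : 0 ≤ 1 - exp (-(l * x)) := sub_nonneg.2 (exp_le_one_iff.2 (by nlinarith))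
  by unfold geDensity; positivity

theorem measurable_geDensity (l v : ℝ) : Measurable (geDensity l v) := by
  unfold geDensity; fun_prop

noncomputable def geMeasure (l v : ℝ) : Measure ℝ :=
  (volume.restrict (Ioi 0)).withDensity fun x => ENNReal.ofReal (geDensity l v x)

theorem toReal_ofReal_geDensity_ae {l v : ℝ} (hl : 0 ≤ l) (hv : 0 ≤ v) :
    ∀ᵐ x ∂volume.restrict (Ioi 0), (ENNReal.ofReal (geDensity l v x)).toReal = geDensity l v x := by
  filter_upwards [ae_restrict_mem measurableSet_Ioi] with x hx
  exact ENNReal.toReal_ofReal (geDensity_nonneg hl hv (le_of_lt hx))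

theorem integral_geMeasure {l v : ℝ} (hl : 0 ≤ l) (hv : 0 ≤ v) (g : ℝ → ℝ) :
    ∫ x, g x ∂geMeasure l v = ∫ x in Ioi 0, g x * geDensity l v x := by
  rw [geMeasure, integral_withDensity_eq_integral_toReal_smul
    (measurable_geDensity l v).ennreal_ofReal (ae_of_all _ fun _ => ENNReal.ofReal_lt_top)]
  refine integral_congr_ae ?_
  filter_upwards [toReal_ofReal_geDensity_ae hl hv] with x hx
  rw [hx, smul_eq_mul, mul_comm]

theorem integrable_geMeasure_iff {l v : ℝ} (hl : 0 ≤ l) (hv : 0 ≤ v) {g : ℝ → ℝ} :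
    Integrable g (geMeasure l v) ↔ IntegrableOn (fun x => g x * geDensity l v x) (Ioi 0) := by
  rw [geMeasure, integrable_withDensity_iff_integrable_smul'
    (measurable_geDensity l v).ennreal_ofReal (ae_of_all _ fun _ => ENNReal.ofReal_lt_top)]
  refine integrable_congr ?_
  filter_upwards [toReal_ofReal_geDensity_ae hl hv] with x hx
  rw [hx, smul_eq_mul, mul_comm]

theorem exp_mul_geDensity_eq {l v t x : ℝ} (hl : 0 < l) :
    exp (t * x) * geDensity l v x
      = l * (v * (exp (-((1 - t / l) * (l * x))) * (1 - exp (-(l * x))) ^ (v - 1))) := by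
  rw [geDensity, show -((1 - t / l) * (l * x)) = t * x + -(l * x) by field_simp; ring, exp_add]
  ring

theorem integrableOn_exp_mul_geDensity {l v t : ℝ} (hl : 0 < l) (hv : 0 < v) (ht : t < l) :
    IntegrableOn (fun x => exp (t * x) * geDensity l v x) (Ioi 0) := by
  simp only [exp_mul_geDensity_eq hl]
  refine Integrable.const_mul ?_ l
  rw [← IntegrableOn, integrableOn_Ioi_comp_mul_left_iff (fun y =>
    v * (exp (-((1 - t / l) * y)) * (1 - exp (-y)) ^ (v - 1))) 0 hl, mul_zero]
  exact (integrableOn_exp_mul_one_sub_exp_rpow (by rwa [sub_pos, div_lt_one hl]) hv).const_mul v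

theorem integral_exp_mul_geDensity {l v t : ℝ} (hl : 0 < l) (hv : 0 < v) (ht : t < l) :
    ∫ x in Ioi (0 : ℝ), exp (t * x) * geDensity l v x = v * beta (1 - t / l) v := by
  simp only [exp_mul_geDensity_eq hl]
  rw [integral_const_mul, integral_comp_mul_left_Ioi (fun y =>
    v * (exp (-((1 - t / l) * y)) * (1 - exp (-y)) ^ (v - 1))) 0 hl, mul_zero, integral_const_mul,
    integral_exp_mul_one_sub_exp_rpow (by rwa [sub_pos, div_lt_one hl]) hv, smul_eq_mul,
    ← mul_assoc, mul_inv_cancel₀ hl.ne', one_mul]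

theorem exp_mul_sub_mul_eq (t x μ y : ℝ) :
    exp (t * (x - μ)) * y = exp (-(t * μ)) * (exp (t * x) * y) := by
  rw [← mul_assoc, ← exp_add]
  ring_nf

theorem Iio_subset_integrableExpSet_geMeasure {l v : ℝ} (hl : 0 < l) (hv : 0 < v) (μ : ℝ) :
    Iio l ⊆ integrableExpSet (fun x => x - μ) (geMeasure l v) := fun t ht => by
  change Integrable _ _
  rw [integrable_geMeasure_iff hl.le hv.le]
  simp only [exp_mul_sub_mul_eq]
  exact (integrableOn_exp_mul_geDensity hl hv ht).const_mul _

theorem mgf_geMeasure_sub {l v t : ℝ} (hl : 0 < l) (hv : 0 < v) (μ : ℝ) (ht : t < l) :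
    mgf (fun x => x - μ) (geMeasure l v) t
      = exp (log (Gamma (1 - t / l)) - log (Gamma (v + 1 - t / l)) + log (Gamma (v + 1))
          - t * μ) := by
  have htl : t / l < 1 := (div_lt_one hl).2 ht
  have hΓ₁ : 0 < Gamma (1 - t / l) := Gamma_pos_of_pos (by linarith)
  have hΓ₂ : 0 < Gamma (v + 1 - t / l) := Gamma_pos_of_pos (by linarith)
  rw [mgf, integral_geMeasure hl.le hv.le]
  simp only [exp_mul_sub_mul_eq]
  rw [integral_const_mul, integral_exp_mul_geDensity hl hv ht, beta, exp_sub, exp_add, exp_sub,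
    exp_log hΓ₁, exp_log hΓ₂, exp_log (Gamma_pos_of_pos (by linarith)), Gamma_add_one hv.ne',
    exp_neg, show 1 - t / l + v = v + 1 - t / l by ring]
  field_simp

theorem HasDerivAt.sub_comp_sub_div {F F' : ℝ → ℝ} {v l t : ℝ} (hv : 0 < v) (hl : 0 < l)
    (ht : t < l) (hF : ∀ x, 0 < x → HasDerivAt F (F' x) x) :
    HasDerivAt (fun t => F (1 - t / l) - F (v + 1 - t / l))
      (-(F' (1 - t / l) - F' (v + 1 - t / l)) / l) t := by
  have htl : t / l < 1 := (div_lt_one hl).2 ht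
  have hdiv : HasDerivAt (fun t => t / l) (1 / l) t := (hasDerivAt_id t).div_const l
  have h₁ := (hF _ (by linarith)).comp t (hdiv.const_sub 1)
  have h₂ := (hF _ (by linarith)).comp t (hdiv.const_sub (v + 1))
  exact (h₁.sub h₂).congr_deriv (by ring)

theorem moment_geMeasure_sub {l v μ : ℝ} (hl : 0 < l) (hv : 0 < v)
    (hμ : μ = (digamma (v + 1) - digamma 1) / l) :
    moment (fun x => x - μ) 2 (geMeasure l v) = (trigamma 1 - trigamma (v + 1)) / l ^ 2 ∧
      moment (fun x => x - μ) 3 (geMeasure l v) = (tetragamma (v + 1) - tetragamma 1) / l ^ 3 := by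
  have key := moment_two_three_of_mgf_eqOn_exp isOpen_Iio hl
    (Iio_subset_integrableExpSet_geMeasure hl hv μ)
    (K := fun t => log (Gamma (1 - t / l)) - log (Gamma (v + 1 - t / l)) + log (Gamma (v + 1))
      - t * μ)
    (K₁ := fun t => -(digamma (1 - t / l) - digamma (v + 1 - t / l)) / l - μ)
    (K₂ := fun t => (trigamma (1 - t / l) - trigamma (v + 1 - t / l)) / l ^ 2)
    (K₃ := fun t => -(tetragamma (1 - t / l) - tetragamma (v + 1 - t / l)) / l ^ 3)
    (fun t ht => ((HasDerivAt.sub_comp_sub_div hv hl ht fun _ => hasDerivAt_log_Gamma).add_const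
      _ |>.sub ((hasDerivAt_id t).mul_const μ)).congr_deriv (by simp))
    (fun t ht => ((HasDerivAt.sub_comp_sub_div hv hl ht fun _ => hasDerivAt_digamma).neg.div_const
      l |>.sub_const μ).congr_deriv (by ring))
    (fun t ht => ((HasDerivAt.sub_comp_sub_div hv hl ht fun _ => hasDerivAt_trigamma).div_const
      (l ^ 2)).congr_deriv (by ring))
    (fun t ht => mgf_geMeasure_sub hl hv μ ht)
  simp only [zero_div, sub_zero, zero_mul, Gamma_one, log_one, zero_sub, neg_add_cancel,
    exp_zero, mul_one] at key
  have hK₁ : -(digamma 1 - digamma (v + 1)) / l - μ = 0 := by rw [hμ]; ring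
  rw [hK₁] at key
  exact ⟨by rw [key.1]; ring, by rw [key.2]; ring⟩

theorem sq_rpow_three_div_two {l : ℝ} (hl : 0 ≤ l) : (l ^ 2) ^ ((3 : ℝ) / 2) = l ^ 3 := by
  rw [← rpow_natCast, ← rpow_mul hl, ← rpow_natCast]
  norm_num

/-- The third central moment of the GE distribution is `(ψ''(ν+1) − ψ''(1)) / λ³`, and
consequently the skewness (third central moment over variance to the power 3/2) equals
`(ψ''(ν+1) − ψ''(1)) / (ψ'(1) − ψ'(ν+1))^(3/2)`, which does not depend on `λ`. -/
theorem ge_third_central_moment_and_skewness (l v : ℝ) (hl : 0 < l) (hv : 0 < v)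
    (μ : ℝ) (hμ : μ = (digamma (v + 1) - digamma 1) / l) :
    (∫ x in Ioi (0 : ℝ), (x - μ) ^ 3 * geDensity l v x =
        (tetragamma (v + 1) - tetragamma 1) / l ^ 3) ∧
    (∫ x in Ioi (0 : ℝ), (x - μ) ^ 3 * geDensity l v x) /
        (∫ x in Ioi (0 : ℝ), (x - μ) ^ 2 * geDensity l v x) ^ ((3 : ℝ) / 2) =
      (tetragamma (v + 1) - tetragamma 1) /
        (trigamma 1 - trigamma (v + 1)) ^ ((3 : ℝ) / 2) := by
  have hmoment (n : ℕ) : ∫ x in Ioi (0 : ℝ), (x - μ) ^ n * geDensity l v x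
      = moment (fun x => x - μ) n (geMeasure l v) :=
    (integral_geMeasure hl.le hv.le _).symm
  obtain ⟨h₂, h₃⟩ := moment_geMeasure_sub hl hv hμ
  have hvar : 0 ≤ trigamma 1 - trigamma (v + 1) := by
    have h : 0 ≤ moment (fun x => x - μ) 2 (geMeasure l v) :=
      integral_nonneg fun x => by simp only [Pi.pow_apply]; positivity
    rwa [h₂, le_div_iff₀ (by positivity), zero_mul] at h
  rw [hmoment, hmoment, h₂, h₃, div_rpow hvar (sq_nonneg l), sq_rpow_three_div_two hl.le,
    div_div_div_cancel_right₀ (by positivity)]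
  exact ⟨rfl, rfl⟩
end

section
/- Let α ≥ 0, λ > 0, and ν > max(1, α/(1 + α)), let f(x; λ, ν) be the GE density, and let u_ν(x) = 1/ν + log(1 − exp(−λx)) be the score function with respect to ν. Then ∫₀^∞ u_ν(x) f(x; λ, ν)^(1+α) dx = λ^α ν^α B(1 + α, (1 + α)(ν − 1) + 1) (1 + ν (ψ((1 + α)(ν − 1) + 1) − ψ((1 + α)ν + 1))). -/
/-!
The substitution `t = 1 - exp (-λx)`, with `dt = λ exp (-λx) dx`, turns the integral into
`λ^α ν^(1+α) ∫₀¹ (1/ν + log t) t^(p-1) (1-t)^(q-1) dt` with `p = (1+α)(ν-1)+1` and `q = 1+α`.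
The constant part is the Beta integral `B(p, q)`, and the logarithmic part is its derivative in
`p`, obtained by differentiating under the integral sign; since `B(p, q) = Γ(p)Γ(q)/Γ(p+q)`,
that derivative is `B(p, q)(ψ(p) - ψ(p+q))`.
-/

open Real Set

/-- The GE score function with respect to the shape parameter `ν`. -/
noncomputable def geScoreShape (l v x : ℝ) : ℝ :=
  1 / v + Real.log (1 - Real.exp (-(l * x)))

/-- The real Beta function `B(a, b) = Γ(a)Γ(b)/Γ(a+b)`. -/
noncomputable def realBeta (a b : ℝ) : ℝ :=
  Real.Gamma a * Real.Gamma b / Real.Gamma (a + b)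

open MeasureTheory Filter

lemma realBeta_comm (p q : ℝ) : realBeta p q = realBeta q p := by
  rw [realBeta, realBeta, add_comm, mul_comm (Gamma p)]

lemma realBeta_pos {p q : ℝ} (hp : 0 < p) (hq : 0 < q) : 0 < realBeta p q :=
  div_pos (mul_pos (Gamma_pos_of_pos hp) (Gamma_pos_of_pos hq)) (Gamma_pos_of_pos (add_pos hp hq))

theorem integral_rpow_mul_one_sub_rpow_s9 {p q : ℝ} (hp : 0 < p) (hq : 0 < q) :
    ∫ t in Ioo (0 : ℝ) 1, t ^ (p - 1) * (1 - t) ^ (q - 1) = realBeta p q := by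
  have hB := Complex.betaIntegral_eq_Gamma_mul_div p q (by simpa) (by simpa)
  rw [← Complex.ofReal_add, Complex.Gamma_ofReal, Complex.Gamma_ofReal, Complex.Gamma_ofReal,
    Complex.betaIntegral] at hB
  rw [← integral_Ioc_eq_integral_Ioo, ← intervalIntegral.integral_of_le zero_le_one, realBeta,
    ← Complex.ofReal_inj, ← intervalIntegral.integral_ofReal]
  push_cast
  rw [← hB]
  refine intervalIntegral.integral_congr fun t ht => ?_
  rw [uIcc_of_le zero_le_one] at ht
  rw [Complex.ofReal_cpow ht.1, Complex.ofReal_cpow (sub_nonneg.2 ht.2)]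
  push_cast
  rfl

lemma integrableOn_rpow_mul_one_sub_rpow_s9 {p q : ℝ} (hp : 0 < p) (hq : 0 < q) :
    IntegrableOn (fun t : ℝ => t ^ (p - 1) * (1 - t) ^ (q - 1)) (Ioo 0 1) :=
  .of_integral_ne_zero <| by
    rw [integral_rpow_mul_one_sub_rpow_s9 hp hq]
    exact (realBeta_pos hp hq).ne'

lemma differentiableAt_Gamma_of_pos {x : ℝ} (hx : 0 < x) : DifferentiableAt ℝ Gamma x :=
  differentiableAt_Gamma fun m h => by linarith [h ▸ hx, (m.cast_nonneg : (0 : ℝ) ≤ m)]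

lemma digamma_eq_deriv_Gamma_div_Gamma {x : ℝ} (hx : 0 < x) :
    digamma x = deriv Gamma x / Gamma x :=
  Real.deriv_log_comp_eq_logDeriv (differentiableAt_Gamma_of_pos hx) (Gamma_pos_of_pos hx).ne'

lemma hasDerivAt_realBeta_left {p q : ℝ} (hp : 0 < p) (hq : 0 < q) :
    HasDerivAt (fun s => realBeta s q) (realBeta p q * (digamma p - digamma (p + q))) p := by
  have hpq : 0 < p + q := add_pos hp hq
  have hnum : HasDerivAt (fun s => Gamma s * Gamma q) (deriv Gamma p * Gamma q) p :=
    (differentiableAt_Gamma_of_pos hp).hasDerivAt.mul_const _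
  have hden : HasDerivAt (fun s => Gamma (s + q)) (deriv Gamma (p + q)) p :=
    (differentiableAt_Gamma_of_pos hpq).hasDerivAt.comp_add_const p q
  refine (hnum.div hden (Gamma_pos_of_pos hpq).ne').congr_deriv ?_
  have := (Gamma_pos_of_pos hp).ne'
  have := (Gamma_pos_of_pos hpq).ne'
  rw [digamma_eq_deriv_Gamma_div_Gamma hp, digamma_eq_deriv_Gamma_div_Gamma hpq, realBeta]
  field_simp

lemma neg_log_le_rpow_neg_div {t ε : ℝ} (ht : 0 < t) (hε : 0 < ε) : -log t ≤ t ^ (-ε) / ε := by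
  simpa [log_inv, rpow_neg ht.le, inv_rpow ht.le] using log_le_rpow_div (inv_nonneg.2 ht.le) hε

lemma hasDerivAt_rpow_sub_one_exponent {t : ℝ} (ht : 0 < t) (s : ℝ) :
    HasDerivAt (fun s => t ^ (s - 1)) (log t * t ^ (s - 1)) s :=
  ((hasStrictDerivAt_const_rpow ht (s - 1)).hasDerivAt.comp s
    ((hasDerivAt_id s).sub_const 1)).congr_deriv (by ring)

/-- Differentiation under the integral sign: on `|s - p| < p / 2` the derivative
`log t · t^(s-1) (1-t)^(q-1)` is dominated by the Beta integrand with exponent `p / 4`,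
because `|log t| ≤ t^(-p/4) / (p/4)`. -/
theorem hasDerivAt_integral_rpow_mul_one_sub_rpow {p q : ℝ} (hp : 0 < p) (hq : 0 < q) :
    IntegrableOn (fun t => log t * (t ^ (p - 1) * (1 - t) ^ (q - 1))) (Ioo 0 1) ∧
    HasDerivAt (fun s => ∫ t in Ioo (0 : ℝ) 1, t ^ (s - 1) * (1 - t) ^ (q - 1))
      (∫ t in Ioo (0 : ℝ) 1, log t * (t ^ (p - 1) * (1 - t) ^ (q - 1))) p := by
  have hp4 : 0 < p / 4 := by positivity
  refine hasDerivAt_integral_of_dominated_loc_of_deriv_le (μ := volume.restrict (Ioo 0 1))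
    (F := fun s t => t ^ (s - 1) * (1 - t) ^ (q - 1))
    (F' := fun s t => log t * (t ^ (s - 1) * (1 - t) ^ (q - 1)))
    (bound := fun t => (p / 4)⁻¹ * (t ^ (p / 4 - 1) * (1 - t) ^ (q - 1)))
    (Metric.ball_mem_nhds p (half_pos hp)) (.of_forall fun s => by fun_prop)
    (integrableOn_rpow_mul_one_sub_rpow_s9 hp hq) (by fun_prop) ?_
    ((integrableOn_rpow_mul_one_sub_rpow_s9 hp4 hq).const_mul _) ?_
  · filter_upwards [ae_restrict_mem measurableSet_Ioo] with t ⟨ht0, ht1⟩ s hs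
    have hs : p / 2 - 1 ≤ s - 1 := by
      linarith [(abs_lt.1 (Real.dist_eq s p ▸ Metric.mem_ball.1 hs)).1]
    have hlog : |log t| ≤ (p / 4)⁻¹ * t ^ (-(p / 4)) := by
      rw [abs_of_nonpos (log_nonpos ht0.le ht1.le), inv_mul_eq_div]
      exact neg_log_le_rpow_neg_div ht0 hp4
    calc ‖log t * (t ^ (s - 1) * (1 - t) ^ (q - 1))‖
        = |log t| * (t ^ (s - 1) * (1 - t) ^ (q - 1)) := by
          rw [norm_mul, Real.norm_eq_abs, Real.norm_of_nonneg (by positivity)]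
      _ ≤ (p / 4)⁻¹ * t ^ (-(p / 4)) * (t ^ (p / 2 - 1) * (1 - t) ^ (q - 1)) := by
          gcongr ?_ * (?_ * _)
          exact rpow_le_rpow_of_exponent_ge ht0 ht1.le hs
      _ = (p / 4)⁻¹ * (t ^ (p / 4 - 1) * (1 - t) ^ (q - 1)) := by
          rw [mul_assoc, ← mul_assoc (t ^ _), ← rpow_add ht0]
          ring_nf
  · filter_upwards [ae_restrict_mem measurableSet_Ioo] with t ht s _
    exact ((hasDerivAt_rpow_sub_one_exponent ht.1 s).mul_const _).congr_deriv (mul_assoc _ _ _)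

theorem integral_log_mul_rpow_mul_one_sub_rpow {p q : ℝ} (hp : 0 < p) (hq : 0 < q) :
    ∫ t in Ioo (0 : ℝ) 1, log t * (t ^ (p - 1) * (1 - t) ^ (q - 1)) =
      realBeta p q * (digamma p - digamma (p + q)) :=
  (hasDerivAt_integral_rpow_mul_one_sub_rpow hp hq).2.unique <|
    (hasDerivAt_realBeta_left hp hq).congr_of_eventuallyEq <|
      eventually_of_mem (Ioi_mem_nhds hp) fun _ hs => integral_rpow_mul_one_sub_rpow_s9 hs hq

theorem integral_add_log_mul_rpow_mul_one_sub_rpow (c : ℝ) {p q : ℝ} (hp : 0 < p) (hq : 0 < q) :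
    ∫ t in Ioo (0 : ℝ) 1, (c + log t) * (t ^ (p - 1) * (1 - t) ^ (q - 1)) =
      realBeta p q * (c + digamma p - digamma (p + q)) := by
  simp_rw [add_mul]
  rw [integral_add ((integrableOn_rpow_mul_one_sub_rpow_s9 hp hq).const_mul c)
    (hasDerivAt_integral_rpow_mul_one_sub_rpow hp hq).1, integral_const_mul,
    integral_rpow_mul_one_sub_rpow_s9 hp hq, integral_log_mul_rpow_mul_one_sub_rpow hp hq]
  ring

lemma image_one_sub_exp_neg_mul_Ioi {l : ℝ} (hl : 0 < l) :
    (fun x => 1 - exp (-(l * x))) '' Ioi 0 = Ioo 0 1 := by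
  ext t
  constructor
  · rintro ⟨x, hx, rfl⟩
    have : exp (-(l * x)) < 1 := exp_lt_one_iff.2 (by nlinarith [mem_Ioi.1 hx])
    exact ⟨by linarith, by linarith [exp_pos (-(l * x))]⟩
  · rintro ⟨ht0, ht1⟩
    refine ⟨-log (1 - t) / l, div_pos (neg_pos.2 (log_neg (by linarith) (by linarith))) hl, ?_⟩
    dsimp only
    rw [mul_div_cancel₀ _ hl.ne', neg_neg, exp_log (by linarith), sub_sub_cancel]

theorem integral_Ioi_mul_exp_neg_comp_one_sub_exp {l : ℝ} (hl : 0 < l) (g : ℝ → ℝ) :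
    ∫ x in Ioi 0, l * exp (-(l * x)) * g (1 - exp (-(l * x))) = ∫ t in Ioo 0 1, g t := by
  have hderiv (x : ℝ) : HasDerivAt (fun x => 1 - exp (-(l * x))) (l * exp (-(l * x))) x := by
    simpa [mul_comm] using ((hasDerivAt_id x).const_mul l).neg.exp.const_sub 1
  have hinj : InjOn (fun x => 1 - exp (-(l * x))) (Ioi 0) := fun x _ y _ h => by
    simpa [hl.ne'] using h
  rw [← image_one_sub_exp_neg_mul_Ioi hl,
    integral_image_eq_integral_abs_deriv_smul measurableSet_Ioi
      (fun x _ => (hderiv x).hasDerivWithinAt) hinj]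
  simp_rw [smul_eq_mul, abs_of_pos (mul_pos hl (exp_pos _))]

lemma geScoreShape_mul_geDensity_rpow (a : ℝ) {l v x : ℝ} (hl : 0 < l) (hv : 0 ≤ v)
    (hx : 0 ≤ x) :
    geScoreShape l v x * geDensity l v x ^ (1 + a) =
      l * exp (-(l * x)) * (l ^ a * v ^ (1 + a) * ((1 / v + log (1 - exp (-(l * x)))) *
        ((1 - exp (-(l * x))) ^ ((1 + a) * (v - 1)) * (1 - (1 - exp (-(l * x)))) ^ a))) := by
  have hE := exp_pos (-(l * x))
  have hT : 0 ≤ 1 - exp (-(l * x)) := sub_nonneg.2 (exp_le_one_iff.2 (by nlinarith))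
  rw [geScoreShape, geDensity, sub_sub_cancel, mul_rpow (by positivity) (by positivity),
    mul_rpow (by positivity) (by positivity), mul_rpow (by positivity) (by positivity),
    ← rpow_mul hT, rpow_add hl, rpow_add hE, rpow_one, rpow_one, mul_comm (v - 1)]
  ring

/-- For `α ≥ 0`, `λ > 0` and `ν > max(1, α/(1+α))`,
`∫₀^∞ u_ν(x) f(x; λ, ν)^(1+α) dx
  = λ^α ν^α B(1+α, (1+α)(ν−1)+1) (1 + ν (ψ((1+α)(ν−1)+1) − ψ((1+α)ν+1)))`. -/
theorem ge_weighted_score_shape_integral (a l v : ℝ) (ha : 0 ≤ a) (hl : 0 < l)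
    (hv : max 1 (a / (1 + a)) < v) :
    ∫ x in Ioi (0 : ℝ), geScoreShape l v x * geDensity l v x ^ (1 + a) =
      l ^ a * v ^ a * realBeta (1 + a) ((1 + a) * (v - 1) + 1) *
        (1 + v * (digamma ((1 + a) * (v - 1) + 1) - digamma ((1 + a) * v + 1))) := by
  have hq : 0 < 1 + a := by linarith
  have hav : a < (1 + a) * v := (div_lt_iff₀' hq).1 (max_lt_iff.1 hv).2
  have hv0 : 0 < v := pos_of_mul_pos_right (ha.trans_lt hav) hq.le
  have hp : 0 < (1 + a) * (v - 1) + 1 := by linarith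
  have hB := integral_add_log_mul_rpow_mul_one_sub_rpow (1 / v) hp hq
  rw [add_sub_cancel_right, add_sub_cancel_left,
    show (1 + a) * (v - 1) + 1 + (1 + a) = (1 + a) * v + 1 by ring] at hB
  set g : ℝ → ℝ := fun t =>
    l ^ a * v ^ (1 + a) * ((1 / v + log t) * (t ^ ((1 + a) * (v - 1)) * (1 - t) ^ a))
  calc _ = ∫ x in Ioi (0 : ℝ), l * exp (-(l * x)) * g (1 - exp (-(l * x))) :=
        setIntegral_congr_fun measurableSet_Ioi fun x hx =>
          geScoreShape_mul_geDensity_rpow a hl hv0.le (le_of_lt hx)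
    _ = ∫ t in Ioo (0 : ℝ) 1, g t := integral_Ioi_mul_exp_neg_comp_one_sub_exp hl g
    _ = l ^ a * v ^ (1 + a) * (realBeta ((1 + a) * (v - 1) + 1) (1 + a) *
          (1 / v + digamma ((1 + a) * (v - 1) + 1) - digamma ((1 + a) * v + 1))) := by
        rw [integral_const_mul, hB]
    _ = _ := by
        rw [realBeta_comm, rpow_add hv0, rpow_one]
        field_simp
        ring
end

section
/- (Theorem 2) Let α ≥ 0, ν > 1, and λ > 0, and let Σ_β(λ, ν) = J_β(λ, ν)⁻¹ K_β(λ, ν) J_β(λ, ν)⁻¹ denote the asymptotic covariance matrix of the rescaled MDPDE with tuning parameter β, built from the GE score vector u and density f as in Theorem 1. Assume J_0(1, ν) and J_α(1, ν) are invertible. Then the asymptotic relative efficiencies ARE(λ̂_α) = Σ_0(λ, ν)_{11} / Σ_α(λ, ν)_{11} and ARE(ν̂_α) = Σ_0(λ, ν)_{22} / Σ_α(λ, ν)_{22} do not depend on λ: Σ_0(λ, ν)_{11} / Σ_α(λ, ν)_{11} = Σ_0(1, ν)_{11} / Σ_α(1, ν)_{11} and Σ_0(λ, ν)_{22} / Σ_α(λ,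 ν)_{22} = Σ_0(1, ν)_{22} / Σ_α(1, ν)_{22}. -/
/-!
The rate `λ` is a scale parameter: `f(x; λ, ν) = λ f(λx; 1, ν)`, `u_λ(x; λ, ν) = λ⁻¹ u_λ(λx; 1, ν)`
and `u_ν(x; λ, ν) = u_ν(λx; 1, ν)`. Substituting `y = λx` gives, with `D = diag(λ⁻¹, 1)`,
`J_β(λ, ν) = λ^β D J_β(1, ν) D` and `K_β(λ, ν) = λ^{2β} D K_β(1, ν) D`. The powers of `λ` cancel in
the sandwich `J⁻¹ K J⁻¹`, so `Σ_β(λ, ν) = D⁻¹ Σ_β(1, ν) D⁻¹`: the diagonal entries of `Σ_β` are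
multiplied by `λ²` and `1` whatever `β` is, and these factors cancel in the efficiency ratios.
-/

open Real Set

/-- The GE score vector `u(x) = (u_λ(x), u_ν(x))ᵀ`. -/
noncomputable def geScore (l v x : ℝ) : Fin 2 → ℝ :=
  ![1 / l - x + (v - 1) * x * Real.exp (-(l * x)) / (1 - Real.exp (-(l * x))),
    1 / v + Real.log (1 - Real.exp (-(l * x)))]

/-- `J_β(λ, ν) = ∫₀^∞ u(x) u(x)ᵀ f(x; λ, ν)^(1+β) dx`. -/
noncomputable def geJ (b l v : ℝ) : Matrix (Fin 2) (Fin 2) ℝ :=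
  Matrix.of fun i j =>
    ∫ x in Ioi (0 : ℝ), geScore l v x i * geScore l v x j * geDensity l v x ^ (1 + b)

/-- `ξ_α(λ, ν) = ∫₀^∞ u(x) f(x; λ, ν)^(1+α) dx`. -/
noncomputable def geXi (a l v : ℝ) : Fin 2 → ℝ := fun i =>
  ∫ x in Ioi (0 : ℝ), geScore l v x i * geDensity l v x ^ (1 + a)

/-- `K_α(λ, ν) = J_{2α}(λ, ν) − ξ_α(λ, ν) ξ_α(λ, ν)ᵀ`. -/
noncomputable def geK (a l v : ℝ) : Matrix (Fin 2) (Fin 2) ℝ :=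
  geJ (2 * a) l v - Matrix.of fun i j => geXi a l v i * geXi a l v j

/-- The asymptotic covariance matrix `Σ_α(λ, ν) = J_α⁻¹ K_α J_α⁻¹` of the rescaled MDPDE. -/
noncomputable def geSigma (a l v : ℝ) : Matrix (Fin 2) (Fin 2) ℝ :=
  (geJ a l v)⁻¹ * geK a l v * (geJ a l v)⁻¹

open MeasureTheory Matrix

section

variable {K n : Type*} [Field K] [Fintype n] [DecidableEq n]

theorem Matrix.inv_smul_of_ne_zero {c : K} (hc : c ≠ 0) (A : Matrix n n K) :
    (c • A)⁻¹ = c⁻¹ • A⁻¹ := by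
  by_cases hA : IsUnit A.det
  · exact inv_smul' A (Units.mk0 c hc) hA
  · have hcA : ¬IsUnit (c • A).det := by
      rwa [det_smul, IsUnit.mul_iff, not_and_or, or_iff_right (by simpa using pow_ne_zero _ hc)]
    rw [nonsing_inv_apply_not_isUnit _ hA, nonsing_inv_apply_not_isUnit _ hcA, smul_zero]

theorem Matrix.inv_mul_mul_inv_of_smul_conj {c : K} (hc : c ≠ 0) {D E : Matrix n n K}
    (hED : E * D = 1) (J M : Matrix n n K) :
    (c • (D * J * D))⁻¹ * (c ^ 2 • (D * M * D)) * (c • (D * J * D))⁻¹ =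
      E * (J⁻¹ * M * J⁻¹) * E := by
  have hDE : D * E = 1 := mul_eq_one_comm.mp hED
  have hD : D⁻¹ = E := inv_eq_left_inv hED
  simp only [inv_smul_of_ne_zero hc, mul_inv_rev, hD, Matrix.smul_mul, Matrix.mul_smul, smul_smul]
  rw [show c⁻¹ * (c ^ 2 * c⁻¹) = 1 by field_simp, one_smul]
  simp only [Matrix.mul_assoc]
  rw [← Matrix.mul_assoc E D, hED, Matrix.one_mul, ← Matrix.mul_assoc D E, hDE, Matrix.one_mul]

end

lemma setIntegral_Ioi_zero_comp_mul_left {E : Type*} [NormedAddCommGroup E] [NormedSpace ℝ E]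
    (g : ℝ → E) {l : ℝ} (hl : 0 < l) :
    ∫ x in Ioi 0, g (l * x) = l⁻¹ • ∫ x in Ioi 0, g x := by
  simpa using integral_comp_mul_left_Ioi g 0 hl

lemma geDensity_eq_mul_geDensity_one (l v x : ℝ) :
    geDensity l v x = l * geDensity 1 v (l * x) := by
  simp only [geDensity, one_mul]
  ring

lemma geDensity_one_nonneg {v y : ℝ} (hv : 0 ≤ v) (hy : 0 ≤ y) : 0 ≤ geDensity 1 v y := by
  have : Real.exp (-(1 * y)) ≤ 1 := Real.exp_le_one_iff.mpr (by linarith)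
  have : 0 ≤ 1 - Real.exp (-(1 * y)) := by linarith
  unfold geDensity
  positivity

lemma geDensity_rpow_eq {l v x : ℝ} (hl : 0 < l) (hv : 0 ≤ v) (hx : 0 < x) (p : ℝ) :
    geDensity l v x ^ p = l ^ p * geDensity 1 v (l * x) ^ p := by
  rw [geDensity_eq_mul_geDensity_one, mul_rpow hl.le (geDensity_one_nonneg hv (by positivity))]

lemma geScore_apply_eq {l : ℝ} (hl : l ≠ 0) (v x : ℝ) (i : Fin 2) :
    geScore l v x i = ![l⁻¹, 1] i * geScore 1 v (l * x) i := by
  fin_cases i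
  · simp only [geScore, one_mul, Fin.zero_eta, Matrix.cons_val_zero]
    field_simp
  · simp [geScore]

section

variable {l v : ℝ}

lemma geJ_apply_eq (hl : 0 < l) (hv : 0 ≤ v) (b : ℝ) (i j : Fin 2) :
    geJ b l v i j = l ^ b * (![l⁻¹, 1] i * ![l⁻¹, 1] j * geJ b 1 v i j) := by
  have hpt : ∀ x ∈ Ioi (0 : ℝ),
      geScore l v x i * geScore l v x j * geDensity l v x ^ (1 + b) =
        ![l⁻¹, 1] i * ![l⁻¹, 1] j * l ^ (1 + b) *
          (geScore 1 v (l * x) i * geScore 1 v (l * x) j * geDensity 1 v (l * x) ^ (1 + b)) := by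
    intro x hx
    rw [geScore_apply_eq hl.ne', geScore_apply_eq hl.ne', geDensity_rpow_eq hl hv hx]
    ring
  simp only [geJ, of_apply]
  rw [setIntegral_congr_fun measurableSet_Ioi hpt, integral_const_mul,
    setIntegral_Ioi_zero_comp_mul_left
      (fun y => geScore 1 v y i * geScore 1 v y j * geDensity 1 v y ^ (1 + b)) hl,
    smul_eq_mul, rpow_add hl, rpow_one]
  field_simp

lemma geXi_apply_eq (hl : 0 < l) (hv : 0 ≤ v) (a : ℝ) (i : Fin 2) :
    geXi a l v i = l ^ a * (![l⁻¹, 1] i * geXi a 1 v i) := by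
  have hpt : ∀ x ∈ Ioi (0 : ℝ),
      geScore l v x i * geDensity l v x ^ (1 + a) =
        ![l⁻¹, 1] i * l ^ (1 + a) * (geScore 1 v (l * x) i * geDensity 1 v (l * x) ^ (1 + a)) := by
    intro x hx
    rw [geScore_apply_eq hl.ne', geDensity_rpow_eq hl hv hx]
    ring
  simp only [geXi]
  rw [setIntegral_congr_fun measurableSet_Ioi hpt, integral_const_mul,
    setIntegral_Ioi_zero_comp_mul_left (fun y => geScore 1 v y i * geDensity 1 v y ^ (1 + a)) hl,
    smul_eq_mul, rpow_add hl, rpow_one]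
  field_simp

lemma geJ_eq_smul (hl : 0 < l) (hv : 0 ≤ v) (b : ℝ) :
    geJ b l v = l ^ b • (diagonal ![l⁻¹, 1] * geJ b 1 v * diagonal ![l⁻¹, 1]) := by
  ext i j
  rw [Matrix.smul_apply, mul_diagonal, diagonal_mul, geJ_apply_eq hl hv, smul_eq_mul]
  ring

lemma geK_eq_smul (hl : 0 < l) (hv : 0 ≤ v) (a : ℝ) :
    geK a l v = (l ^ a) ^ 2 • (diagonal ![l⁻¹, 1] * geK a 1 v * diagonal ![l⁻¹, 1]) := by
  have hpow : l ^ (2 * a) = (l ^ a) ^ 2 := by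
    rw [← rpow_natCast, ← rpow_mul hl.le, mul_comm, Nat.cast_ofNat]
  ext i j
  simp only [geK, Matrix.smul_apply, mul_diagonal, diagonal_mul, Matrix.sub_apply, of_apply,
    smul_eq_mul]
  rw [geJ_apply_eq hl hv, geXi_apply_eq hl hv, geXi_apply_eq hl hv, hpow]
  ring

lemma geSigma_eq (hl : 0 < l) (hv : 0 ≤ v) (b : ℝ) :
    geSigma b l v = diagonal ![l, 1] * geSigma b 1 v * diagonal ![l, 1] := by
  have hinv : diagonal ![l, 1] * diagonal ![l⁻¹, 1] = 1 := by
    rw [diagonal_mul_diagonal, ← diagonal_one]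
    congr 1
    ext i
    fin_cases i <;> simp [hl.ne']
  rw [geSigma, geJ_eq_smul hl hv, geK_eq_smul hl hv,
    inv_mul_mul_inv_of_smul_conj (rpow_pos_of_pos hl b).ne' hinv, geSigma]

lemma geSigma_apply_self (hl : 0 < l) (hv : 0 ≤ v) (b : ℝ) (i : Fin 2) :
    geSigma b l v i i = ![l, 1] i ^ 2 * geSigma b 1 v i i := by
  rw [geSigma_eq hl hv, mul_diagonal, diagonal_mul]
  ring

lemma geSigma_div_geSigma_apply_self (hl : 0 < l) (hv : 0 ≤ v) (a b : ℝ) (i : Fin 2) :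
    geSigma a l v i i / geSigma b l v i i = geSigma a 1 v i i / geSigma b 1 v i i := by
  have hscale : ![l, 1] i ≠ 0 := by fin_cases i <;> simp [hl.ne']
  rw [geSigma_apply_self hl hv, geSigma_apply_self hl hv,
    mul_div_mul_left _ _ (pow_ne_zero 2 hscale)]

end

theorem ge_ARE_independent_of_rate_general (a v : ℝ) (hv : 1 < v) :
    ∀ l : ℝ, 0 < l →
      geSigma 0 l v 0 0 / geSigma a l v 0 0 = geSigma 0 1 v 0 0 / geSigma a 1 v 0 0 ∧
      geSigma 0 l v 1 1 / geSigma a l v 1 1 = geSigma 0 1 v 1 1 / geSigma a 1 v 1 1 := by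
  intro l hl
  have hv₀ : 0 ≤ v := by linarith
  exact ⟨geSigma_div_geSigma_apply_self hl hv₀ 0 a 0, geSigma_div_geSigma_apply_self hl hv₀ 0 a 1⟩

/-- Theorem 2: the asymptotic relative efficiencies of the MDPDE estimators of `λ` and `ν`,
`ARE(λ̂_α) = Σ_0(λ,ν)₁₁ / Σ_α(λ,ν)₁₁` and `ARE(ν̂_α) = Σ_0(λ,ν)₂₂ / Σ_α(λ,ν)₂₂`,
do not depend on `λ`. -/
theorem ge_ARE_independent_of_rate (a v : ℝ) (ha : 0 ≤ a) (hv : 1 < v)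
    (hJ0 : IsUnit (geJ 0 1 v)) (hJa : IsUnit (geJ a 1 v)) :
    ∀ l : ℝ, 0 < l →
      geSigma 0 l v 0 0 / geSigma a l v 0 0 = geSigma 0 1 v 0 0 / geSigma a 1 v 0 0 ∧
      geSigma 0 l v 1 1 / geSigma a l v 1 1 = geSigma 0 1 v 1 1 / geSigma a 1 v 1 1 :=
  ge_ARE_independent_of_rate_general a v hv
end
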